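/- For the nonsymmetric operad with one generator μ of arity n = 2k+1 of odd homological degree and relations μ∘_p μ = μ∘_n μ for all 1 ≤ p ≤ n−1, the cubic element (μ∘_n μ)∘_{2n−1} μ is zero in the operad; i.e., the relation 2(μ∘_n μ)∘_{2n−1} μ = 0 is a consequence of the quadratic relations together with the odd-degree sign rule (μ∘_n μ)∘_1 μ = −(μ∘_1 μ)∘_{2n−1} μ. -/
import Mathlib

/-!
Statement 9.  Let `n = 2k+1 ≥ 3` and consider the free graded ns operad on one generator
`μ` of arity `n` and odd homological degree, modulo the quadratic relations
`μ∘_p μ = μ∘_n μ` (`1 ≤ p ≤ n-1`).  The weight-3 (arity `3n-2`) component of the free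
operad has basis the trees with three `μ`-vertices, in two shapes:
* `nest i c` : `μ∘ᵢ(μ∘_c μ) = (μ∘ᵢμ)∘_{i+c-1}μ` (nested), `1 ≤ i,c ≤ n`;
* `par a b`  : two disjoint graftings at slots `a < b` of the root, normalised as
  `(μ∘ₐμ)∘_{b+n-1}μ`.
The Koszul sign rule for the odd generator gives `(μ∘ᵢμ)∘ⱼμ = −(par j i)` for `j < i`
(e.g. `(μ∘ₙμ)∘₁μ = −(μ∘₁μ)∘_{2n−1}μ`).  `expr i j` below writes `(μ∘ᵢμ)∘ⱼμ` in this basis.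

Claim: the cubic element `(μ∘ₙμ)∘_{2n−1}μ` (i.e. `nest n n`) lies in the span of the
weight-3 consequences of the quadratic relations; equivalently
`2(μ∘ₙμ)∘_{2n−1}μ = 0` follows from the quadratic relations and the sign rule.
-/

/-- Basis labels for the weight-3 component of the free operad on one generator. -/
inductive W3 : Type
  | par : ℕ → ℕ → W3    -- `(μ∘ₐμ)∘_{b+n-1}μ`, two disjoint graftings at root slots `a < b`
  | nest : ℕ → ℕ → W3   -- `μ∘ₐ(μ∘_c μ)`, nested graftings
deriving DecidableEq

open W3

/-- `(μ∘ᵢμ)∘ⱼμ` expressed in the canonical basis, with the Koszul sign rule for the odd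
generator `μ` of arity `n`. -/
noncomputable def expr (n i j : ℕ) : W3 →₀ ℚ :=
  if i ≤ j ∧ j ≤ i + n - 1 then Finsupp.single (nest i (j - i + 1)) 1
  else if j < i then -Finsupp.single (par j i) 1
  else Finsupp.single (par i (j - n + 1)) 1

/-- The weight-3 consequences of the quadratic relations `μ∘_p μ − μ∘_n μ` (`p < n`):
compositions of a relation with `μ` on the right (at any slot `j` of the two-vertex
tree) and on the left (`μ∘ᵢ(relation)`). -/
noncomputable def relSpan (n : ℕ) : Submodule ℚ (W3 →₀ ℚ) :=
  Submodule.span ℚ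
    {x | (∃ p j, 1 ≤ p ∧ p ≤ n - 1 ∧ 1 ≤ j ∧ j ≤ 2 * n - 1 ∧
            x = expr n p j - expr n n j) ∨
         (∃ i p, 1 ≤ i ∧ i ≤ n ∧ 1 ≤ p ∧ p ≤ n - 1 ∧
            x = Finsupp.single (nest i p) 1 - Finsupp.single (nest i n) 1)}

/-- For the odd `(2k+1)`-associative operad, the cubic monomial `(μ∘ₙμ)∘_{2n−1}μ`
vanishes: it lies in the operadic ideal generated by the quadratic relations
(in weight 3 this ideal is `relSpan`). -/
theorem odd_assoc_cubic_relation (k : ℕ) (hk : 1 ≤ k) (n : ℕ) (hn : n = 2 * k + 1) :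
    Finsupp.single (nest n n) (1 : ℚ) ∈ relSpan n := by
  have hn3 : 3 ≤ n := by omega
  -- the five generators we use
  have h1 : expr n 1 1 - expr n n 1 ∈ relSpan n :=
    Submodule.subset_span (Or.inl ⟨1, 1, le_refl 1, by omega, le_refl 1, by omega, rfl⟩)
  have h2 : expr n 1 (2 * n - 1) - expr n n (2 * n - 1) ∈ relSpan n :=
    Submodule.subset_span (Or.inl ⟨1, 2 * n - 1, le_refl 1, by omega, by omega, le_refl _, rfl⟩)
  have h3 : expr n 1 n - expr n n n ∈ relSpan n :=
    Submodule.subset_span (Or.inl ⟨1, n, le_refl 1, by omega, by omega, by omega, rfl⟩)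
  have h4 : Finsupp.single (nest 1 1) (1 : ℚ) - Finsupp.single (nest 1 n) 1 ∈ relSpan n :=
    Submodule.subset_span (Or.inr ⟨1, 1, le_refl 1, by omega, le_refl 1, by omega, rfl⟩)
  have h5 : Finsupp.single (nest n 1) (1 : ℚ) - Finsupp.single (nest n n) 1 ∈ relSpan n :=
    Submodule.subset_span (Or.inr ⟨n, 1, by omega, le_refl n, le_refl 1, by omega, rfl⟩)
  -- evaluate the `expr`s
  have e1 : expr n 1 1 = Finsupp.single (nest 1 1) 1 := by
    unfold expr; rw [if_pos (by omega : 1 ≤ 1 ∧ 1 ≤ 1 + n - 1)]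
  have e2 : expr n n 1 = -Finsupp.single (par 1 n) 1 := by
    unfold expr; rw [if_neg (by omega), if_pos (by omega)]
  have e3 : expr n 1 (2 * n - 1) = Finsupp.single (par 1 n) 1 := by
    unfold expr; rw [if_neg (by omega), if_neg (by omega)]
    have : 2 * n - 1 - n + 1 = n := by omega
    rw [this]
  have e4 : expr n n (2 * n - 1) = Finsupp.single (nest n n) 1 := by
    unfold expr; rw [if_pos (by omega : n ≤ 2 * n - 1 ∧ 2 * n - 1 ≤ n + n - 1)]
    have : 2 * n - 1 - n + 1 = n := by omega
    rw [this]
  have e5 : expr n 1 n = Finsupp.single (nest 1 n) 1 := by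
    unfold expr; rw [if_pos (by omega : 1 ≤ n ∧ n ≤ 1 + n - 1)]
    have : n - 1 + 1 = n := by omega
    rw [this]
  have e6 : expr n n n = Finsupp.single (nest n 1) 1 := by
    unfold expr; rw [if_pos (by omega : n ≤ n ∧ n ≤ n + n - 1)]
    have : n - n + 1 = 1 := by omega
    rw [this]
  have key : Finsupp.single (nest n n) (1 : ℚ) =
      (1 / 2 : ℚ) • ((expr n 1 1 - expr n n 1)
        - (expr n 1 (2 * n - 1) - expr n n (2 * n - 1))
        - (expr n 1 n - expr n n n)
        - (Finsupp.single (nest 1 1) (1 : ℚ) - Finsupp.single (nest 1 n) 1)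
        - (Finsupp.single (nest n 1) (1 : ℚ) - Finsupp.single (nest n n) 1)) := by
    rw [e1, e2, e3, e4, e5, e6]
    module
  rw [key]
  exact Submodule.smul_mem _ _
    (sub_mem (sub_mem (sub_mem (sub_mem h1 h2) h3) h4) h5)
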